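/- Let V be a finite-dimensional real vector space with a symmetric bilinear form ⟨·,·⟩, a, b, d ∈ {−1,1}, n ≥ 2 an integer, H, C ∈ ℝ with C ≠ 0. Let g : ℝ → ℝ be positive and twice differentiable with g′(t)² + d·g(t)²·(a + b·κ₁(t)²) = C and g″(t) = −d·g(t)·(a + b·κ₁(t)·κ₂(t)) for all t, where κ₁ = H + g^(−n), κ₂ = H − (n−1)·g^(−n). Let α : ℝ → V be twice differentiable and β : ℝ → V differentiable with α″ = b·d·κ₂·β − a·d·α and β′ = −κ₂·α′, satisfying ⟨α(0),α(0)⟩ = a, ⟨β(0),β(0)⟩ = b, ⟨α′(0),α′(0)⟩ = d and ⟨α(0),β(0)⟩ = ⟨α(0),α′(0)⟩ = ⟨β(0),α′(0)⟩ = 0. Set ρ₀ := −g′(0)·α′(0) + b·d·g(0)·κ₁(0)·β(0) − d·a·g(0)·α(0), and let y ∈ V satisfy ⟨y,y⟩ = d·|C|/C and ⟨y, α(t)⟩ = ⟨y, β(t)⟩ = ⟨y, α′(t)⟩ = 0 for all t. Define φ(y,t) := (g(t)/√|C|)·y + α(t) + (g(t)/C)·ρ₀ and ν(y,t) := −(κ₁(t)·g(t)/√|C|)·y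 + β(t) − (κ₁(t)·g(t)/C)·ρ₀. Then for every t ∈ ℝ: ⟨ν(y,t), ν(y,t)⟩ = b and ⟨ν(y,t), φ(y,t)⟩ = 0. -/

import Mathlib

open Set

lemma bilin_hasDerivAt {V : Type*} [NormedAddCommGroup V] [NormedSpace ℝ V]
    [FiniteDimensional ℝ V] (B : V →ₗ[ℝ] V →ₗ[ℝ] ℝ)
    {x y : ℝ → V} {x' y' : V} {t : ℝ}
    (hx : HasDerivAt x x' t) (hy : HasDerivAt y y' t) :
    HasDerivAt (fun s => B (x s) (y s)) (B x' (y t) + B (x t) y') t := by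
  let B2 : V →ₗ[ℝ] V →L[ℝ] ℝ :=
    { toFun := fun v => LinearMap.toContinuousLinearMap (B v)
      map_add' := by intro u v; ext w; simp
      map_smul' := by intro c v; ext w; simp }
  let Bc : V →L[ℝ] V →L[ℝ] ℝ := LinearMap.toContinuousLinearMap B2
  have hc : HasDerivAt (fun s => Bc (x s)) (Bc x') t :=
    Bc.hasFDerivAt.comp_hasDerivAt t hx
  have := hc.clm_apply hy
  exact this

lemma zero_of_selfbound_nonneg {h D K : ℝ → ℝ}
    (hh : ∀ t, HasDerivAt h (D t) t) (hK : Continuous K) (h0 : h 0 = 0)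
    (hb : ∀ t, |D t| ≤ K t * |h t|) : ∀ t ≥ (0:ℝ), h t = 0 := by
  intro T hT
  obtain ⟨s₀, hs₀mem, hs₀⟩ := isCompact_Icc.exists_isMaxOn (nonempty_Icc.2 hT)
    (hK.continuousOn (s := Icc 0 T))
  set M : ℝ := max (K s₀) 0 with hM
  have key := norm_le_gronwallBound_of_norm_deriv_right_le (E := ℝ)
    (f := h) (f' := D) (δ := 0) (K := M) (ε := 0) (a := 0) (b := T)
    (fun x _ => (hh x).continuousAt.continuousWithinAt)
    (fun x _ => (hh x).hasDerivWithinAt)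
    (by simp [h0])
    (fun x hx => by
      have h1 : |D x| ≤ K x * |h x| := hb x
      have h2 : K x ≤ M := le_trans (hs₀ (Ico_subset_Icc_self hx)) (le_max_left _ _)
      have : K x * |h x| ≤ M * |h x| := mul_le_mul_of_nonneg_right h2 (abs_nonneg _)
      simpa [Real.norm_eq_abs] using le_trans h1 (by linarith))
  have hkey := key T (right_mem_Icc.2 hT)
  rw [gronwallBound_ε0, Real.norm_eq_abs] at hkey
  have h1 : |h T| ≤ 0 := by simpa using hkey
  have h2 := abs_nonneg (h T)
  exact abs_eq_zero.1 (le_antisymm h1 h2)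

lemma zero_of_selfbound {h D K : ℝ → ℝ}
    (hh : ∀ t, HasDerivAt h (D t) t) (hK : Continuous K) (h0 : h 0 = 0)
    (hb : ∀ t, |D t| ≤ K t * |h t|) : ∀ t, h t = 0 := by
  intro t
  rcases le_or_gt 0 t with ht | ht
  · exact zero_of_selfbound_nonneg hh hK h0 hb t ht
  · have hneg : ∀ s, HasDerivAt (fun u => h (-u)) (-(D (-s))) s := by
      intro s
      have := (hh (-s)).comp s (hasDerivAt_neg s)
      exact this.congr_deriv (by ring)
    have := zero_of_selfbound_nonneg (h := fun u => h (-u)) (D := fun s => -(D (-s)))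
      (K := fun s => K (-s)) hneg (hK.comp continuous_neg) (by simpa using h0)
      (fun s => by simpa using hb (-s)) (-t) (by linarith)
    simpa using this

lemma sq_sum_six {x1 x2 x3 x4 x5 x6 : ℝ}
    (h : x1^2+x2^2+x3^2+x4^2+x5^2+x6^2 = 0) :
    x1 = 0 ∧ x2 = 0 ∧ x3 = 0 ∧ x4 = 0 ∧ x5 = 0 ∧ x6 = 0 := by
  have n1 := sq_nonneg x1; have n2 := sq_nonneg x2; have n3 := sq_nonneg x3
  have n4 := sq_nonneg x4; have n5 := sq_nonneg x5; have n6 := sq_nonneg x6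
  refine ⟨?_, ?_, ?_, ?_, ?_, ?_⟩ <;>
    [ (exact pow_eq_zero_iff two_ne_zero |>.1 (le_antisymm (by linarith) n1));
      (exact pow_eq_zero_iff two_ne_zero |>.1 (le_antisymm (by linarith) n2));
      (exact pow_eq_zero_iff two_ne_zero |>.1 (le_antisymm (by linarith) n3));
      (exact pow_eq_zero_iff two_ne_zero |>.1 (le_antisymm (by linarith) n4));
      (exact pow_eq_zero_iff two_ne_zero |>.1 (le_antisymm (by linarith) n5));
      (exact pow_eq_zero_iff two_ne_zero |>.1 (le_antisymm (by linarith) n6))]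
set_option maxHeartbeats 1000000 in
lemma alg_bound (a b d k f1 f2 f3 f4 f5 f6 : ℝ)
    (ha : a = -1 ∨ a = 1) (hb : b = -1 ∨ b = 1) (hd : d = -1 ∨ d = 1) :
    |2*(f1 - a)*(2*f5) + 2*(f2 - b)*(-2*k*f6)
      + 2*(f3 - d)*(2*(b*d*k*f6 - a*d*f5)) + 2*f4*(f6 - k*f5)
      + 2*f5*(f3 + b*d*k*f4 - a*d*f1)
      + 2*f6*(-k*f3 + b*d*k*f2 - a*d*f4)|
      ≤ 8*(1+|k|) * ((f1-a)^2+(f2-b)^2+(f3-d)^2+f4^2+f5^2+f6^2) := by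
  have hk1 : 0 ≤ |k| - k := by cases abs_cases k <;> linarith [abs_nonneg k]
  have hk2 : 0 ≤ |k| + k := by cases abs_cases k <;> linarith [abs_nonneg k]
  rcases ha with rfl | rfl <;> rcases hb with rfl | rfl <;> rcases hd with rfl | rfl <;>
      rw [abs_le] <;> constructor
  · linarith [sq_nonneg (f1+1+f5),
      mul_nonneg hk1 (sq_nonneg (f2+1+f6)),
      mul_nonneg hk2 (sq_nonneg (f2+1-f6)),
      mul_nonneg hk2 (sq_nonneg (f3+1+f6)),
      mul_nonneg hk1 (sq_nonneg (f3+1-f6)),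
      sq_nonneg (f3+1-f5),
      sq_nonneg (f1+1),
      mul_nonneg (abs_nonneg k) (sq_nonneg (f1+1)),
      sq_nonneg (f2+1),
      mul_nonneg (abs_nonneg k) (sq_nonneg (f2+1)),
      sq_nonneg (f3+1),
      mul_nonneg (abs_nonneg k) (sq_nonneg (f3+1)),
      sq_nonneg f4,
      mul_nonneg (abs_nonneg k) (sq_nonneg f4),
      sq_nonneg f5,
      mul_nonneg (abs_nonneg k) (sq_nonneg f5),
      sq_nonneg f6,
      mul_nonneg (abs_nonneg k) (sq_nonneg f6)]
  · linarith [sq_nonneg (f1+1-f5),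
      mul_nonneg hk2 (sq_nonneg (f2+1+f6)),
      mul_nonneg hk1 (sq_nonneg (f2+1-f6)),
      mul_nonneg hk1 (sq_nonneg (f3+1+f6)),
      mul_nonneg hk2 (sq_nonneg (f3+1-f6)),
      sq_nonneg (f3+1+f5),
      sq_nonneg (f1+1),
      mul_nonneg (abs_nonneg k) (sq_nonneg (f1+1)),
      sq_nonneg (f2+1),
      mul_nonneg (abs_nonneg k) (sq_nonneg (f2+1)),
      sq_nonneg (f3+1),
      mul_nonneg (abs_nonneg k) (sq_nonneg (f3+1)),
      sq_nonneg f4,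
      mul_nonneg (abs_nonneg k) (sq_nonneg f4),
      sq_nonneg f5,
      mul_nonneg (abs_nonneg k) (sq_nonneg f5),
      sq_nonneg f6,
      mul_nonneg (abs_nonneg k) (sq_nonneg f6)]
  · linarith [sq_nonneg (f1+1+f5),
      mul_nonneg hk1 (sq_nonneg (f2+1+f6)),
      mul_nonneg hk2 (sq_nonneg (f2+1-f6)),
      mul_nonneg hk1 (sq_nonneg (f3-1+f6)),
      mul_nonneg hk2 (sq_nonneg (f3-1-f6)),
      sq_nonneg (f3-1+f5),
      sq_nonneg (f4+f6),
      mul_nonneg hk1 (sq_nonneg (f4+f5)),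
      mul_nonneg hk2 (sq_nonneg (f4-f5)),
      sq_nonneg (f1+1),
      mul_nonneg (abs_nonneg k) (sq_nonneg (f1+1)),
      sq_nonneg (f2+1),
      mul_nonneg (abs_nonneg k) (sq_nonneg (f2+1)),
      sq_nonneg (f3-1),
      mul_nonneg (abs_nonneg k) (sq_nonneg (f3-1)),
      sq_nonneg f4,
      mul_nonneg (abs_nonneg k) (sq_nonneg f4),
      sq_nonneg f5,
      mul_nonneg (abs_nonneg k) (sq_nonneg f5),
      sq_nonneg f6,
      mul_nonneg (abs_nonneg k) (sq_nonneg f6)]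
  · linarith [sq_nonneg (f1+1-f5),
      mul_nonneg hk2 (sq_nonneg (f2+1+f6)),
      mul_nonneg hk1 (sq_nonneg (f2+1-f6)),
      mul_nonneg hk2 (sq_nonneg (f3-1+f6)),
      mul_nonneg hk1 (sq_nonneg (f3-1-f6)),
      sq_nonneg (f3-1-f5),
      sq_nonneg (f4-f6),
      mul_nonneg hk2 (sq_nonneg (f4+f5)),
      mul_nonneg hk1 (sq_nonneg (f4-f5)),
      sq_nonneg (f1+1),
      mul_nonneg (abs_nonneg k) (sq_nonneg (f1+1)),
      sq_nonneg (f2+1),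
      mul_nonneg (abs_nonneg k) (sq_nonneg (f2+1)),
      sq_nonneg (f3-1),
      mul_nonneg (abs_nonneg k) (sq_nonneg (f3-1)),
      sq_nonneg f4,
      mul_nonneg (abs_nonneg k) (sq_nonneg f4),
      sq_nonneg f5,
      mul_nonneg (abs_nonneg k) (sq_nonneg f5),
      sq_nonneg f6,
      mul_nonneg (abs_nonneg k) (sq_nonneg f6)]
  · linarith [sq_nonneg (f1+1+f5),
      mul_nonneg hk1 (sq_nonneg (f2-1+f6)),
      mul_nonneg hk2 (sq_nonneg (f2-1-f6)),
      mul_nonneg hk1 (sq_nonneg (f3+1+f6)),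
      mul_nonneg hk2 (sq_nonneg (f3+1-f6)),
      sq_nonneg (f3+1-f5),
      mul_nonneg hk1 (sq_nonneg (f4+f5)),
      mul_nonneg hk2 (sq_nonneg (f4-f5)),
      sq_nonneg (f1+1),
      mul_nonneg (abs_nonneg k) (sq_nonneg (f1+1)),
      sq_nonneg (f2-1),
      mul_nonneg (abs_nonneg k) (sq_nonneg (f2-1)),
      sq_nonneg (f3+1),
      mul_nonneg (abs_nonneg k) (sq_nonneg (f3+1)),
      sq_nonneg f4,
      mul_nonneg (abs_nonneg k) (sq_nonneg f4),
      sq_nonneg f5,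
      mul_nonneg (abs_nonneg k) (sq_nonneg f5),
      sq_nonneg f6,
      mul_nonneg (abs_nonneg k) (sq_nonneg f6)]
  · linarith [sq_nonneg (f1+1-f5),
      mul_nonneg hk2 (sq_nonneg (f2-1+f6)),
      mul_nonneg hk1 (sq_nonneg (f2-1-f6)),
      mul_nonneg hk2 (sq_nonneg (f3+1+f6)),
      mul_nonneg hk1 (sq_nonneg (f3+1-f6)),
      sq_nonneg (f3+1+f5),
      mul_nonneg hk2 (sq_nonneg (f4+f5)),
      mul_nonneg hk1 (sq_nonneg (f4-f5)),
      sq_nonneg (f1+1),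
      mul_nonneg (abs_nonneg k) (sq_nonneg (f1+1)),
      sq_nonneg (f2-1),
      mul_nonneg (abs_nonneg k) (sq_nonneg (f2-1)),
      sq_nonneg (f3+1),
      mul_nonneg (abs_nonneg k) (sq_nonneg (f3+1)),
      sq_nonneg f4,
      mul_nonneg (abs_nonneg k) (sq_nonneg f4),
      sq_nonneg f5,
      mul_nonneg (abs_nonneg k) (sq_nonneg f5),
      sq_nonneg f6,
      mul_nonneg (abs_nonneg k) (sq_nonneg f6)]
  · linarith [sq_nonneg (f1+1+f5),
      mul_nonneg hk1 (sq_nonneg (f2-1+f6)),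
      mul_nonneg hk2 (sq_nonneg (f2-1-f6)),
      mul_nonneg hk2 (sq_nonneg (f3-1+f6)),
      mul_nonneg hk1 (sq_nonneg (f3-1-f6)),
      sq_nonneg (f3-1+f5),
      sq_nonneg (f4+f6),
      sq_nonneg (f1+1),
      mul_nonneg (abs_nonneg k) (sq_nonneg (f1+1)),
      sq_nonneg (f2-1),
      mul_nonneg (abs_nonneg k) (sq_nonneg (f2-1)),
      sq_nonneg (f3-1),
      mul_nonneg (abs_nonneg k) (sq_nonneg (f3-1)),
      sq_nonneg f4,
      mul_nonneg (abs_nonneg k) (sq_nonneg f4),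
      sq_nonneg f5,
      mul_nonneg (abs_nonneg k) (sq_nonneg f5),
      sq_nonneg f6,
      mul_nonneg (abs_nonneg k) (sq_nonneg f6)]
  · linarith [sq_nonneg (f1+1-f5),
      mul_nonneg hk2 (sq_nonneg (f2-1+f6)),
      mul_nonneg hk1 (sq_nonneg (f2-1-f6)),
      mul_nonneg hk1 (sq_nonneg (f3-1+f6)),
      mul_nonneg hk2 (sq_nonneg (f3-1-f6)),
      sq_nonneg (f3-1-f5),
      sq_nonneg (f4-f6),
      sq_nonneg (f1+1),
      mul_nonneg (abs_nonneg k) (sq_nonneg (f1+1)),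
      sq_nonneg (f2-1),
      mul_nonneg (abs_nonneg k) (sq_nonneg (f2-1)),
      sq_nonneg (f3-1),
      mul_nonneg (abs_nonneg k) (sq_nonneg (f3-1)),
      sq_nonneg f4,
      mul_nonneg (abs_nonneg k) (sq_nonneg f4),
      sq_nonneg f5,
      mul_nonneg (abs_nonneg k) (sq_nonneg f5),
      sq_nonneg f6,
      mul_nonneg (abs_nonneg k) (sq_nonneg f6)]
  · linarith [sq_nonneg (f1-1+f5),
      mul_nonneg hk1 (sq_nonneg (f2+1+f6)),
      mul_nonneg hk2 (sq_nonneg (f2+1-f6)),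
      mul_nonneg hk2 (sq_nonneg (f3+1+f6)),
      mul_nonneg hk1 (sq_nonneg (f3+1-f6)),
      sq_nonneg (f3+1+f5),
      sq_nonneg (f4+f6),
      sq_nonneg (f1-1),
      mul_nonneg (abs_nonneg k) (sq_nonneg (f1-1)),
      sq_nonneg (f2+1),
      mul_nonneg (abs_nonneg k) (sq_nonneg (f2+1)),
      sq_nonneg (f3+1),
      mul_nonneg (abs_nonneg k) (sq_nonneg (f3+1)),
      sq_nonneg f4,
      mul_nonneg (abs_nonneg k) (sq_nonneg f4),
      sq_nonneg f5,
      mul_nonneg (abs_nonneg k) (sq_nonneg f5),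
      sq_nonneg f6,
      mul_nonneg (abs_nonneg k) (sq_nonneg f6)]
  · linarith [sq_nonneg (f1-1-f5),
      mul_nonneg hk2 (sq_nonneg (f2+1+f6)),
      mul_nonneg hk1 (sq_nonneg (f2+1-f6)),
      mul_nonneg hk1 (sq_nonneg (f3+1+f6)),
      mul_nonneg hk2 (sq_nonneg (f3+1-f6)),
      sq_nonneg (f3+1-f5),
      sq_nonneg (f4-f6),
      sq_nonneg (f1-1),
      mul_nonneg (abs_nonneg k) (sq_nonneg (f1-1)),
      sq_nonneg (f2+1),
      mul_nonneg (abs_nonneg k) (sq_nonneg (f2+1)),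
      sq_nonneg (f3+1),
      mul_nonneg (abs_nonneg k) (sq_nonneg (f3+1)),
      sq_nonneg f4,
      mul_nonneg (abs_nonneg k) (sq_nonneg f4),
      sq_nonneg f5,
      mul_nonneg (abs_nonneg k) (sq_nonneg f5),
      sq_nonneg f6,
      mul_nonneg (abs_nonneg k) (sq_nonneg f6)]
  · linarith [sq_nonneg (f1-1+f5),
      mul_nonneg hk1 (sq_nonneg (f2+1+f6)),
      mul_nonneg hk2 (sq_nonneg (f2+1-f6)),
      mul_nonneg hk1 (sq_nonneg (f3-1+f6)),
      mul_nonneg hk2 (sq_nonneg (f3-1-f6)),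
      sq_nonneg (f3-1-f5),
      mul_nonneg hk1 (sq_nonneg (f4+f5)),
      mul_nonneg hk2 (sq_nonneg (f4-f5)),
      sq_nonneg (f1-1),
      mul_nonneg (abs_nonneg k) (sq_nonneg (f1-1)),
      sq_nonneg (f2+1),
      mul_nonneg (abs_nonneg k) (sq_nonneg (f2+1)),
      sq_nonneg (f3-1),
      mul_nonneg (abs_nonneg k) (sq_nonneg (f3-1)),
      sq_nonneg f4,
      mul_nonneg (abs_nonneg k) (sq_nonneg f4),
      sq_nonneg f5,
      mul_nonneg (abs_nonneg k) (sq_nonneg f5),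
      sq_nonneg f6,
      mul_nonneg (abs_nonneg k) (sq_nonneg f6)]
  · linarith [sq_nonneg (f1-1-f5),
      mul_nonneg hk2 (sq_nonneg (f2+1+f6)),
      mul_nonneg hk1 (sq_nonneg (f2+1-f6)),
      mul_nonneg hk2 (sq_nonneg (f3-1+f6)),
      mul_nonneg hk1 (sq_nonneg (f3-1-f6)),
      sq_nonneg (f3-1+f5),
      mul_nonneg hk2 (sq_nonneg (f4+f5)),
      mul_nonneg hk1 (sq_nonneg (f4-f5)),
      sq_nonneg (f1-1),
      mul_nonneg (abs_nonneg k) (sq_nonneg (f1-1)),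
      sq_nonneg (f2+1),
      mul_nonneg (abs_nonneg k) (sq_nonneg (f2+1)),
      sq_nonneg (f3-1),
      mul_nonneg (abs_nonneg k) (sq_nonneg (f3-1)),
      sq_nonneg f4,
      mul_nonneg (abs_nonneg k) (sq_nonneg f4),
      sq_nonneg f5,
      mul_nonneg (abs_nonneg k) (sq_nonneg f5),
      sq_nonneg f6,
      mul_nonneg (abs_nonneg k) (sq_nonneg f6)]
  · linarith [sq_nonneg (f1-1+f5),
      mul_nonneg hk1 (sq_nonneg (f2-1+f6)),
      mul_nonneg hk2 (sq_nonneg (f2-1-f6)),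
      mul_nonneg hk1 (sq_nonneg (f3+1+f6)),
      mul_nonneg hk2 (sq_nonneg (f3+1-f6)),
      sq_nonneg (f3+1+f5),
      sq_nonneg (f4+f6),
      mul_nonneg hk1 (sq_nonneg (f4+f5)),
      mul_nonneg hk2 (sq_nonneg (f4-f5)),
      sq_nonneg (f1-1),
      mul_nonneg (abs_nonneg k) (sq_nonneg (f1-1)),
      sq_nonneg (f2-1),
      mul_nonneg (abs_nonneg k) (sq_nonneg (f2-1)),
      sq_nonneg (f3+1),
      mul_nonneg (abs_nonneg k) (sq_nonneg (f3+1)),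
      sq_nonneg f4,
      mul_nonneg (abs_nonneg k) (sq_nonneg f4),
      sq_nonneg f5,
      mul_nonneg (abs_nonneg k) (sq_nonneg f5),
      sq_nonneg f6,
      mul_nonneg (abs_nonneg k) (sq_nonneg f6)]
  · linarith [sq_nonneg (f1-1-f5),
      mul_nonneg hk2 (sq_nonneg (f2-1+f6)),
      mul_nonneg hk1 (sq_nonneg (f2-1-f6)),
      mul_nonneg hk2 (sq_nonneg (f3+1+f6)),
      mul_nonneg hk1 (sq_nonneg (f3+1-f6)),
      sq_nonneg (f3+1-f5),
      sq_nonneg (f4-f6),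
      mul_nonneg hk2 (sq_nonneg (f4+f5)),
      mul_nonneg hk1 (sq_nonneg (f4-f5)),
      sq_nonneg (f1-1),
      mul_nonneg (abs_nonneg k) (sq_nonneg (f1-1)),
      sq_nonneg (f2-1),
      mul_nonneg (abs_nonneg k) (sq_nonneg (f2-1)),
      sq_nonneg (f3+1),
      mul_nonneg (abs_nonneg k) (sq_nonneg (f3+1)),
      sq_nonneg f4,
      mul_nonneg (abs_nonneg k) (sq_nonneg f4),
      sq_nonneg f5,
      mul_nonneg (abs_nonneg k) (sq_nonneg f5),
      sq_nonneg f6,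
      mul_nonneg (abs_nonneg k) (sq_nonneg f6)]
  · linarith [sq_nonneg (f1-1+f5),
      mul_nonneg hk1 (sq_nonneg (f2-1+f6)),
      mul_nonneg hk2 (sq_nonneg (f2-1-f6)),
      mul_nonneg hk2 (sq_nonneg (f3-1+f6)),
      mul_nonneg hk1 (sq_nonneg (f3-1-f6)),
      sq_nonneg (f3-1-f5),
      sq_nonneg (f1-1),
      mul_nonneg (abs_nonneg k) (sq_nonneg (f1-1)),
      sq_nonneg (f2-1),
      mul_nonneg (abs_nonneg k) (sq_nonneg (f2-1)),
      sq_nonneg (f3-1),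
      mul_nonneg (abs_nonneg k) (sq_nonneg (f3-1)),
      sq_nonneg f4,
      mul_nonneg (abs_nonneg k) (sq_nonneg f4),
      sq_nonneg f5,
      mul_nonneg (abs_nonneg k) (sq_nonneg f5),
      sq_nonneg f6,
      mul_nonneg (abs_nonneg k) (sq_nonneg f6)]
  · linarith [sq_nonneg (f1-1-f5),
      mul_nonneg hk2 (sq_nonneg (f2-1+f6)),
      mul_nonneg hk1 (sq_nonneg (f2-1-f6)),
      mul_nonneg hk1 (sq_nonneg (f3-1+f6)),
      mul_nonneg hk2 (sq_nonneg (f3-1-f6)),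
      sq_nonneg (f3-1+f5),
      sq_nonneg (f1-1),
      mul_nonneg (abs_nonneg k) (sq_nonneg (f1-1)),
      sq_nonneg (f2-1),
      mul_nonneg (abs_nonneg k) (sq_nonneg (f2-1)),
      sq_nonneg (f3-1),
      mul_nonneg (abs_nonneg k) (sq_nonneg (f3-1)),
      sq_nonneg f4,
      mul_nonneg (abs_nonneg k) (sq_nonneg f4),
      sq_nonneg f5,
      mul_nonneg (abs_nonneg k) (sq_nonneg f5),
      sq_nonneg f6,
      mul_nonneg (abs_nonneg k) (sq_nonneg f6)]
set_option maxHeartbeats 1000000 in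
/-- Theorem 7.3 (Gauss map of the C ≠ 0 immersion): with
`φ(y,t) = (g(t)/√|C|)·y + α(t) + (g(t)/C)·ρ₀` and
`ν(y,t) = −(κ₁(t)·g(t)/√|C|)·y + β(t) − (κ₁(t)·g(t)/C)·ρ₀`, one has
`⟨ν,ν⟩ = b` and `⟨ν,φ⟩ = 0`. -/
theorem stmt_7 (V : Type*) [NormedAddCommGroup V] [NormedSpace ℝ V]
    [FiniteDimensional ℝ V]
    (B : V →ₗ[ℝ] V →ₗ[ℝ] ℝ) (hBsymm : ∀ x y : V, B x y = B y x)
    (n : ℕ) (hn : 2 ≤ n) (H C a b d : ℝ)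
    (ha : a = -1 ∨ a = 1) (hb : b = -1 ∨ b = 1) (hd : d = -1 ∨ d = 1)
    (hC : C ≠ 0)
    (g : ℝ → ℝ) (hgpos : ∀ t, 0 < g t)
    (hg : Differentiable ℝ g) (hg' : Differentiable ℝ (deriv g))
    (κ₁ κ₂ : ℝ → ℝ)
    (hκ₁ : ∀ t, κ₁ t = H + g t ^ (-(n : ℤ)))
    (hκ₂ : ∀ t, κ₂ t = H - ((n : ℝ) - 1) * g t ^ (-(n : ℤ)))
    (hfirstint : ∀ t : ℝ,
      (deriv g t) ^ 2 + d * (g t) ^ 2 * (a + b * (κ₁ t) ^ 2) = C)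
    (hg'' : ∀ t : ℝ, deriv (deriv g) t = -d * g t * (a + b * κ₁ t * κ₂ t))
    (α β : ℝ → V)
    (hα : Differentiable ℝ α) (hα' : Differentiable ℝ (deriv α))
    (hβ : Differentiable ℝ β)
    (hαeq : ∀ t : ℝ, deriv (deriv α) t = (b * d * κ₂ t) • β t - (a * d) • α t)
    (hβeq : ∀ t : ℝ, deriv β t = (-(κ₂ t)) • deriv α t)
    (hαα : B (α 0) (α 0) = a) (hββ : B (β 0) (β 0) = b)
    (hα'α' : B (deriv α 0) (deriv α 0) = d)
    (hαβ : B (α 0) (β 0) = 0) (hαα' : B (α 0) (deriv α 0) = 0)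
    (hβα' : B (β 0) (deriv α 0) = 0)
    (ρ₀ : V)
    (hρ₀ : ρ₀ = (-(deriv g 0)) • deriv α 0
      + (b * d * g 0 * κ₁ 0) • β 0 - (d * a * g 0) • α 0)
    (y : V) (hyy : B y y = d * |C| / C)
    (hyα : ∀ t : ℝ, B y (α t) = 0) (hyβ : ∀ t : ℝ, B y (β t) = 0)
    (hyα' : ∀ t : ℝ, B y (deriv α t) = 0) :
    ∀ t : ℝ,
      B ((-(κ₁ t * g t / Real.sqrt |C|)) • y + β t - (κ₁ t * g t / C) • ρ₀)
          ((-(κ₁ t * g t / Real.sqrt |C|)) • y + β t - (κ₁ t * g t / C) • ρ₀) = b ∧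
      B ((-(κ₁ t * g t / Real.sqrt |C|)) • y + β t - (κ₁ t * g t / C) • ρ₀)
          ((g t / Real.sqrt |C|) • y + α t + (g t / C) • ρ₀) = 0 := by
  have ha2 : a * a = 1 := by rcases ha with rfl | rfl <;> norm_num
  have hb2 : b * b = 1 := by rcases hb with rfl | rfl <;> norm_num
  have hd2 : d * d = 1 := by rcases hd with rfl | rfl <;> norm_num
  have hane : ∀ s, g s ≠ 0 := fun s => (hgpos s).ne'
  have hαd : ∀ t, HasDerivAt α (deriv α t) t := fun t => (hα t).hasDerivAt
  have hα'd : ∀ t, HasDerivAt (deriv α) ((b * d * κ₂ t) • β t - (a * d) • α t) t := by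
    intro t
    have := (hα' t).hasDerivAt; rwa [hαeq t] at this
  have hβd : ∀ t, HasDerivAt β ((-(κ₂ t)) • deriv α t) t := by
    intro t
    have := (hβ t).hasDerivAt; rwa [hβeq t] at this
  have sAA : ∀ t, B (deriv α t) (α t) = B (α t) (deriv α t) := fun t => hBsymm _ _
  have sAB : ∀ t, B (deriv α t) (β t) = B (β t) (deriv α t) := fun t => hBsymm _ _
  have sBA : ∀ t, B (β t) (α t) = B (α t) (β t) := fun t => hBsymm _ _
  -- the six quadratic functions and their conservation
  set F : ℝ → ℝ := fun s =>
    (B (α s) (α s) - a)^2 + (B (β s) (β s) - b)^2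
      + (B (deriv α s) (deriv α s) - d)^2 + (B (α s) (β s))^2
      + (B (α s) (deriv α s))^2 + (B (β s) (deriv α s))^2 with hFdef
  set DF : ℝ → ℝ := fun s =>
    2*(B (α s) (α s) - a)*(2*(B (α s) (deriv α s)))
      + 2*(B (β s) (β s) - b)*(-2*(κ₂ s)*(B (β s) (deriv α s)))
      + 2*(B (deriv α s) (deriv α s) - d)
        *(2*(b*d*(κ₂ s)*(B (β s) (deriv α s)) - a*d*(B (α s) (deriv α s))))
      + 2*(B (α s) (β s))*((B (β s) (deriv α s)) - (κ₂ s)*(B (α s) (deriv α s)))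
      + 2*(B (α s) (deriv α s))
        *((B (deriv α s) (deriv α s)) + b*d*(κ₂ s)*(B (α s) (β s)) - a*d*(B (α s) (α s)))
      + 2*(B (β s) (deriv α s))
        *(-(κ₂ s)*(B (deriv α s) (deriv α s)) + b*d*(κ₂ s)*(B (β s) (β s))
          - a*d*(B (α s) (β s))) with hDFdef
  have HF : ∀ t, HasDerivAt F (DF t) t := by
    intro t
    have P1 : HasDerivAt (fun s => (B (α s) (α s) - a)^2)
        (2*(B (α t) (α t) - a)*(2*(B (α t) (deriv α t)))) t := by
      have h := (((bilin_hasDerivAt B (hαd t) (hαd t)).sub_const a).pow 2)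
      refine h.congr_deriv ?_
      rw [sAA t]; push_cast; ring
    have P2 : HasDerivAt (fun s => (B (β s) (β s) - b)^2)
        (2*(B (β t) (β t) - b)*(-2*(κ₂ t)*(B (β t) (deriv α t)))) t := by
      have h := (((bilin_hasDerivAt B (hβd t) (hβd t)).sub_const b).pow 2)
      refine h.congr_deriv ?_
      simp only [map_smul, LinearMap.smul_apply, smul_eq_mul, sAB t]
      push_cast; ring
    have P3 : HasDerivAt (fun s => (B (deriv α s) (deriv α s) - d)^2)
        (2*(B (deriv α t) (deriv α t) - d)
          *(2*(b*d*(κ₂ t)*(B (β t) (deriv α t)) - a*d*(B (α t) (deriv α t))))) t := by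
      have h := (((bilin_hasDerivAt B (hα'd t) (hα'd t)).sub_const d).pow 2)
      refine h.congr_deriv ?_
      simp only [map_sub, map_smul, LinearMap.sub_apply, LinearMap.smul_apply,
        smul_eq_mul, sAB t, sAA t]
      push_cast; ring
    have P4 : HasDerivAt (fun s => (B (α s) (β s))^2)
        (2*(B (α t) (β t))*((B (β t) (deriv α t)) - (κ₂ t)*(B (α t) (deriv α t)))) t := by
      have h := ((bilin_hasDerivAt B (hαd t) (hβd t)).pow 2)
      refine h.congr_deriv ?_
      simp only [map_smul, LinearMap.smul_apply, smul_eq_mul, sAB t]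
      push_cast; ring
    have P5 : HasDerivAt (fun s => (B (α s) (deriv α s))^2)
        (2*(B (α t) (deriv α t))
          *((B (deriv α t) (deriv α t)) + b*d*(κ₂ t)*(B (α t) (β t))
            - a*d*(B (α t) (α t)))) t := by
      have h := ((bilin_hasDerivAt B (hαd t) (hα'd t)).pow 2)
      refine h.congr_deriv ?_
      simp only [map_sub, map_smul, LinearMap.sub_apply, LinearMap.smul_apply,
        smul_eq_mul, sAA t]
      push_cast; ring
    have P6 : HasDerivAt (fun s => (B (β s) (deriv α s))^2)
        (2*(B (β t) (deriv α t))
          *(-(κ₂ t)*(B (deriv α t) (deriv α t)) + b*d*(κ₂ t)*(B (β t) (β t))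
            - a*d*(B (α t) (β t)))) t := by
      have h := ((bilin_hasDerivAt B (hβd t) (hα'd t)).pow 2)
      refine h.congr_deriv ?_
      simp only [map_sub, map_smul, LinearMap.sub_apply, LinearMap.smul_apply,
        smul_eq_mul, sAB t, sBA t]
      push_cast; ring
    exact ((((P1.add P2).add P3).add P4).add P5).add P6
  have hκ₂c : Continuous κ₂ := by
    have hfun : κ₂ = fun t => H - ((n : ℝ) - 1) * g t ^ (-(n : ℤ)) := funext hκ₂
    rw [hfun]
    exact continuous_const.sub (continuous_const.mul
      (hg.continuous.zpow₀ _ (fun x => Or.inl (hane x))))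
  have hKc : Continuous (fun t => 8*(1+|κ₂ t|)) :=
    continuous_const.mul (continuous_const.add hκ₂c.abs)
  have hF0 : F 0 = 0 := by
    rw [hFdef]
    simp only [hαα, hββ, hα'α', hαβ, hαα', hβα']
    ring
  have hDFb : ∀ t, |DF t| ≤ (fun t => 8*(1+|κ₂ t|)) t * |F t| := by
    intro t
    have h0 : |F t| = F t := abs_of_nonneg (by rw [hFdef]; positivity)
    rw [h0, hFdef]
    exact alg_bound a b d (κ₂ t) _ _ _ _ _ _ ha hb hd
  have hFzero : ∀ t, F t = 0 := zero_of_selfbound HF hKc hF0 hDFb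
  have hvals : ∀ t, B (α t) (α t) = a ∧ B (β t) (β t) = b
      ∧ B (deriv α t) (deriv α t) = d ∧ B (α t) (β t) = 0
      ∧ B (α t) (deriv α t) = 0 ∧ B (β t) (deriv α t) = 0 := by
    intro t
    have h := hFzero t
    rw [hFdef] at h
    obtain ⟨h1, h2, h3, h4, h5, h6⟩ := sq_sum_six h
    exact ⟨by linarith, by linarith, by linarith, h4, h5, h6⟩
  -- derivative of g * κ₁
  have hgd : ∀ t, HasDerivAt g (deriv g t) t := fun t => (hg t).hasDerivAt
  have hg'd : ∀ t, HasDerivAt (deriv g) (-d * g t * (a + b * κ₁ t * κ₂ t)) t := by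
    intro t
    have := (hg' t).hasDerivAt; rwa [hg'' t] at this
  have hgκ : ∀ t, HasDerivAt (fun s => g s * κ₁ s) (deriv g t * κ₂ t) t := by
    intro t
    have heq : (fun s => g s * κ₁ s) = fun s => H * g s + g s ^ ((1:ℤ) - n) := by
      funext s
      rw [hκ₁ s, mul_add, show ((1:ℤ) - n) = 1 + -(n:ℤ) by ring,
        zpow_add₀ (hane s), zpow_one]
      ring
    rw [heq]
    have h1 : HasDerivAt (fun s => H * g s) (H * deriv g t) t := (hgd t).const_mul H
    have h2 : HasDerivAt (fun s => g s ^ ((1:ℤ) - n))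
        ((((1:ℤ) - n : ℤ) : ℝ) * g t ^ ((1:ℤ) - n - 1) * deriv g t) t := by
      have := (hasDerivAt_zpow ((1:ℤ) - n) (g t) (Or.inl (hane t))).comp t (hgd t)
      exact this
    have h3 := h1.add h2
    refine h3.congr_deriv ?_
    rw [hκ₂ t, show (1:ℤ) - n - 1 = -(n:ℤ) by ring]
    push_cast
    ring
  -- the conserved vector ρ
  set ρf : ℝ → V := fun s =>
    (-(deriv g s)) • deriv α s + (b * d * (g s * κ₁ s)) • β s
      - (d * a * (g s)) • α s with hρfdef
  have hρd : ∀ t, HasDerivAt ρf 0 t := by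
    intro t
    have h1 := ((hg'd t).neg).smul (hα'd t)
    have h2 := ((hgκ t).const_mul (b * d)).smul (hβd t)
    have h3 := ((hgd t).const_mul (d * a)).smul (hαd t)
    have h4 := (h1.add h2).sub h3
    refine h4.congr_deriv ?_
    simp only [smul_sub, smul_add, smul_smul, neg_smul, neg_neg, Pi.neg_apply]
    match_scalars <;> ring
  have hρf0 : ρf 0 = ρ₀ := by
    simp only [hρfdef]
    rw [hρ₀]
    module
  have hρconst : ∀ t, ρf t = ρ₀ := by
    intro t
    rw [← hρf0]
    exact is_const_of_deriv_eq_zero (fun s => (hρd s).differentiableAt)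
      (fun s => (hρd s).deriv) t 0
  -- pairings with ρ₀
  have hβρ : ∀ t, B (β t) ρ₀ = d * (g t * κ₁ t) := by
    intro t
    obtain ⟨v1, v2, v3, v4, v5, v6⟩ := hvals t
    rw [← hρconst t, hρfdef]
    simp only [map_add, map_sub, map_smul, smul_eq_mul, sBA t]
    rw [v2, v4, v6]
    linear_combination (d * (g t * κ₁ t)) * hb2
  have hαρ : ∀ t, B (α t) ρ₀ = -(d * g t) := by
    intro t
    obtain ⟨v1, v2, v3, v4, v5, v6⟩ := hvals t
    rw [← hρconst t, hρfdef]
    simp only [map_add, map_sub, map_smul, smul_eq_mul]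
    rw [v1, v4, v5]
    linear_combination (-(d * g t)) * ha2
  have hρρ : B ρ₀ ρ₀ = d * C := by
    obtain ⟨v1, v2, v3, v4, v5, v6⟩ := hvals 0
    rw [← hρconst 0, hρfdef]
    simp only [map_add, map_sub, map_smul, LinearMap.add_apply, LinearMap.sub_apply,
      LinearMap.smul_apply, smul_eq_mul, sAA 0, sAB 0, sBA 0]
    rw [v1, v2, v3, v4, v5, v6]
    linear_combination (d : ℝ) * hfirstint 0
      + (d * d * (g 0 * κ₁ 0)^2 * b) * hb2 + (d * d * (g 0)^2 * a) * ha2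
  have hyρ : B y ρ₀ = 0 := by
    rw [hρ₀]
    simp [map_add, map_sub, map_smul, smul_eq_mul, hyα 0, hyβ 0, hyα' 0]
  -- final computation
  have hS2 : Real.sqrt |C| ^ 2 = |C| := Real.sq_sqrt (abs_nonneg C)
  have hSne : Real.sqrt |C| ≠ 0 := (Real.sqrt_pos.mpr (abs_pos.mpr hC)).ne'
  intro t
  obtain ⟨v1, v2, v3, v4, v5, v6⟩ := hvals t
  have sYB : B (β t) y = 0 := by rw [hBsymm]; exact hyβ t
  have sYR : B ρ₀ y = 0 := by rw [hBsymm]; exact hyρ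
  have sRB : B ρ₀ (β t) = d * (g t * κ₁ t) := by rw [hBsymm]; exact hβρ t
  have sRA : B ρ₀ (α t) = -(d * g t) := by rw [hBsymm]; exact hαρ t
  have sBA' : B (β t) (α t) = 0 := by rw [sBA t]; exact v4
  constructor
  · simp only [map_add, map_sub, map_smul, LinearMap.add_apply, LinearMap.sub_apply,
      LinearMap.smul_apply, smul_eq_mul]
    rw [hyy, hyβ t, hyρ, sYB, v2, hβρ t, sYR, sRB, hρρ]
    field_simp
    linear_combination (-(κ₁ t)^2 * (g t)^2 * d) * hS2
  · simp only [map_add, map_sub, map_smul, LinearMap.add_apply, LinearMap.sub_apply,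
      LinearMap.smul_apply, smul_eq_mul]
    rw [hyy, hyα t, hyρ, sYB, sBA', hβρ t, sYR, sRA, hρρ]
    field_simp
    linear_combination ((κ₁ t) * (g t)^2 * d) * hS2
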